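/- arXiv:1911.10664 — 3 statements merged into one kernel-verified Lean document; each statement's English description precedes it below -/
import Mathlib

section
/- Let $N\ge 1$, $W\in\mathbb{R}^{N\times N}$ symmetric, $b:A\times\mathbb{R}\to\mathbb{R}$ Lipschitz in the sense that $|b(\alpha,z)-b(\alpha',z')|^2\le c_\alpha|\alpha-\alpha'|^2+c_z|z-z'|^2$, and $\xi_1,\dots,\xi_N$ square-integrable random variables. If $\sqrt{c_z}\,\|W\|_F<1$ (with $\|W\|_F^2=\frac{1}{N^2}\sum_{i,j}W_{i,j}^2$), then for any strategy profile $\boldsymbol{\alpha}\in A^N$ there exists a unique $\mathbf{z}\in L^2(\Omega;\mathbb{R}^N)$ satisfying $z_i=\frac{1}{N}\sum_{j=1}^N W_{i,j}\,(b(\alpha_j,z_j)+\xi_j)$ for all $i$. -/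
/-! For a fixed profile `α`, the map `Φ x = (N⁻¹ • W) *ᵥ (b (α j) (x j))ⱼ` on Euclidean `ℝ^N`
is Lipschitz with constant `√cz · ‖W‖_F` by Cauchy–Schwarz, row by row. Hence
`z ↦ Φ ∘ z + N⁻¹ • W *ᵥ ξ` is a contraction of `L²(Ω; ℝ^N)`, a complete space, and Banach's
fixed point theorem gives an aggregate, unique up to a.e. equality. -/

open MeasureTheory Finset
open scoped NNReal ENNReal Matrix

theorem LipschitzWith.of_sq_dist_le {X Y : Type*} [PseudoMetricSpace X] [PseudoMetricSpace Y]
    {f : X → Y} {c : ℝ} (h : ∀ x y, dist (f x) (f y) ^ 2 ≤ c * dist x y ^ 2) :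
    LipschitzWith (√c).toNNReal f := by
  refine LipschitzWith.of_dist_le_mul fun x y => ?_
  rw [Real.coe_toNNReal _ (Real.sqrt_nonneg c), ← Real.sqrt_sq dist_nonneg,
    ← Real.sqrt_sq (dist_nonneg (x := x)), ← Real.sqrt_mul' _ (sq_nonneg _)]
  exact Real.sqrt_le_sqrt (h x y)

theorem Matrix.lipschitzWith_toLp_mulVec_comp {ι κ : Type*} [Fintype ι] [Fintype κ]
    (M : Matrix ι κ ℝ) {g : κ → ℝ → ℝ} {L : ℝ≥0} (hg : ∀ j, LipschitzWith L (g j)) :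
    LipschitzWith (L * (√(∑ i, ∑ j, M i j ^ 2)).toNNReal)
      (fun x : EuclideanSpace ℝ κ => WithLp.toLp 2 (M *ᵥ fun j => g j (x j))) := by
  set S := ∑ i, ∑ j, M i j ^ 2
  refine LipschitzWith.of_dist_le_mul fun x y => ?_
  rw [NNReal.coe_mul, Real.coe_toNNReal _ (Real.sqrt_nonneg S)]
  have hcoord : ∀ j, (g j (x j) - g j (y j)) ^ 2 ≤ (L * dist (x j) (y j)) ^ 2 := fun j => by
    rw [← sq_abs, ← Real.dist_eq]
    exact pow_le_pow_left₀ dist_nonneg ((hg j).dist_le_mul _ _) 2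
  refine (pow_le_pow_iff_left₀ dist_nonneg (by positivity) two_ne_zero).1 ?_
  calc dist _ _ ^ 2
      = ∑ i, (∑ j, M i j * (g j (x j) - g j (y j))) ^ 2 := by
        simp [EuclideanSpace.dist_sq_eq, Real.dist_eq, sq_abs, Matrix.mulVec, dotProduct,
          mul_sub]
    _ ≤ ∑ i, (∑ j, M i j ^ 2) * ∑ j, (g j (x j) - g j (y j)) ^ 2 :=
        sum_le_sum fun i _ => sum_mul_sq_le_sq_mul_sq _ _ _
    _ ≤ S * ∑ j, (L * dist (x j) (y j)) ^ 2 := by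
        rw [← sum_mul]
        exact mul_le_mul_of_nonneg_left (sum_le_sum fun j _ => hcoord j) (by positivity)
    _ = (L * √S * dist x y) ^ 2 := by
        rw [mul_pow, EuclideanSpace.dist_sq_eq, mul_pow, Real.sq_sqrt (by positivity),
          mul_sum, mul_sum]
        exact sum_congr rfl fun j _ => by ring

theorem LipschitzWith.comp_memLp_of_isFiniteMeasure {Ω E F : Type*} [MeasurableSpace Ω]
    {μ : Measure Ω} [IsFiniteMeasure μ] [NormedAddCommGroup E] [NormedAddCommGroup F]
    {p : ℝ≥0∞} {K : ℝ≥0} {Φ : E → F} (hΦ : LipschitzWith K Φ) {z : Ω → E}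
    (hz : MemLp z p μ) : MemLp (Φ ∘ z) p μ := by
  refine ((memLp_const ‖Φ 0‖).add (hz.norm.const_mul K)).of_le
    (hΦ.continuous.comp_aestronglyMeasurable hz.1) (Filter.Eventually.of_forall fun ω => ?_)
  have hΦz := hΦ.norm_sub_le (z ω) 0
  rw [sub_zero] at hΦz
  show ‖Φ (z ω)‖ ≤ ‖‖Φ 0‖ + K * ‖z ω‖‖
  rw [Real.norm_of_nonneg (by positivity)]
  linarith [norm_le_norm_add_norm_sub' (Φ (z ω)) (Φ 0)]

namespace MeasureTheory.Lp

variable {Ω E : Type*} [MeasurableSpace Ω] {μ : Measure Ω} [IsFiniteMeasure μ]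
  [NormedAddCommGroup E] {p : ℝ≥0∞} {K : ℝ≥0} {Φ : E → E}

noncomputable def compAdd (hΦ : LipschitzWith K Φ) (c z : Lp E p μ) : Lp E p μ :=
  (hΦ.comp_memLp_of_isFiniteMeasure (Lp.memLp z)).toLp _ + c

theorem coeFn_compAdd (hΦ : LipschitzWith K Φ) (c z : Lp E p μ) :
    compAdd hΦ c z =ᵐ[μ] fun ω => Φ (z ω) + c ω := by
  filter_upwards [Lp.coeFn_add ((hΦ.comp_memLp_of_isFiniteMeasure (Lp.memLp z)).toLp _) c,
    (hΦ.comp_memLp_of_isFiniteMeasure (Lp.memLp z)).coeFn_toLp] with ω hadd hcomp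
  rw [compAdd, hadd, Pi.add_apply, hcomp, Function.comp_apply]

theorem lipschitzWith_compAdd [Fact (1 ≤ p)] (hΦ : LipschitzWith K Φ) (c : Lp E p μ) :
    LipschitzWith K (compAdd hΦ c) := by
  refine LipschitzWith.of_dist_le_mul fun z z' => ?_
  rw [_root_.dist_eq_norm, _root_.dist_eq_norm]
  apply Lp.norm_le_mul_norm_of_ae_le_mul
  filter_upwards [Lp.coeFn_sub (compAdd hΦ c z) (compAdd hΦ c z'), Lp.coeFn_sub z z',
    coeFn_compAdd hΦ c z, coeFn_compAdd hΦ c z'] with ω hT hz hTz hTz'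
  rw [hT, hz, Pi.sub_apply, Pi.sub_apply, hTz, hTz', add_sub_add_right_eq_sub,
    ← _root_.dist_eq_norm, ← _root_.dist_eq_norm]
  exact hΦ.dist_le_mul _ _

end MeasureTheory.Lp

theorem ContractingWith.exists_memLp_unique_ae_eq_comp_add {Ω E : Type*} [MeasurableSpace Ω]
    {μ : Measure Ω} [IsFiniteMeasure μ] [NormedAddCommGroup E] [CompleteSpace E]
    {p : ℝ≥0∞} [Fact (1 ≤ p)] {K : ℝ≥0} {Φ : E → E} (hΦ : ContractingWith K Φ) {c : Ω → E}
    (hc : MemLp c p μ) :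
    ∃ z : Ω → E, MemLp z p μ ∧ (∀ᵐ ω ∂μ, z ω = Φ (z ω) + c ω) ∧
      ∀ z' : Ω → E, MemLp z' p μ → (∀ᵐ ω ∂μ, z' ω = Φ (z' ω) + c ω) → z' =ᵐ[μ] z := by
  set T := Lp.compAdd hΦ.2 (hc.toLp c)
  have hT : ContractingWith K T := ⟨hΦ.1, Lp.lipschitzWith_compAdd hΦ.2 _⟩
  have hT_eq (z : Lp E p μ) : T z =ᵐ[μ] fun ω => Φ (z ω) + c ω := by
    filter_upwards [Lp.coeFn_compAdd hΦ.2 (hc.toLp c) z, hc.coeFn_toLp] with ω hTz hcω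
    rw [hTz, hcω]
  have : Nonempty (Lp E p μ) := ⟨0⟩
  set z := hT.fixedPoint T
  refine ⟨z, Lp.memLp z, ?_, fun z' hz' hz'_eq => ?_⟩
  · filter_upwards [hT_eq z] with ω hω
    rw [← hω, hT.fixedPoint_isFixedPt]
  · have hfix : Function.IsFixedPt T (hz'.toLp z') := by
      refine Lp.ext ?_
      filter_upwards [hT_eq (hz'.toLp z'), hz'.coeFn_toLp, hz'_eq] with ω hTω hω hω_eq
      rw [hTω, hω, ← hω_eq]
    have hz'z : hz'.toLp z' = z := hT.fixedPoint_unique hfix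
    rw [← hz'z]
    exact hz'.coeFn_toLp.symm

theorem finite_player_aggregate_exists_unique_general
    {Ω : Type*} [MeasurableSpace Ω] (P : Measure Ω) [IsProbabilityMeasure P]
    (N : ℕ) (W : Matrix (Fin N) (Fin N) ℝ)
    (b : ℝ → ℝ → ℝ) (cα cz : ℝ)
    (hb : ∀ α α' z z' : ℝ,
      |b α z - b α' z'| ^ 2 ≤ cα * |α - α'| ^ 2 + cz * |z - z'| ^ 2)
    (ξ : Fin N → Ω → ℝ) (hξ : ∀ i, MemLp (ξ i) 2 P)
    (hWF : Real.sqrt cz *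
      Real.sqrt ((1 / (N : ℝ) ^ 2) * ∑ i, ∑ j, W i j ^ 2) < 1)
    (α : Fin N → ℝ) :
    ∃ z : Ω → Fin N → ℝ,
      (∀ i, MemLp (fun ω => z ω i) 2 P) ∧
      (∀ᵐ ω ∂P, ∀ i,
        z ω i = (1 / (N : ℝ)) * ∑ j, W i j * (b (α j) (z ω j) + ξ j ω)) ∧
      ∀ z' : Ω → Fin N → ℝ,
        (∀ i, MemLp (fun ω => z' ω i) 2 P) →
        (∀ᵐ ω ∂P, ∀ i,
          z' ω i = (1 / (N : ℝ)) * ∑ j, W i j * (b (α j) (z' ω j) + ξ j ω)) →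
        ∀ i, (fun ω => z' ω i) =ᵐ[P] fun ω => z ω i := by
  set M : Matrix (Fin N) (Fin N) ℝ := (N : ℝ)⁻¹ • W
  have hb_lip (a : ℝ) : LipschitzWith (√cz).toNNReal (b a) :=
    LipschitzWith.of_sq_dist_le fun z z' => by simpa [Real.dist_eq, sq_abs] using hb a a z z'
  have hM : √(∑ i, ∑ j, M i j ^ 2) = √((1 / (N : ℝ) ^ 2) * ∑ i, ∑ j, W i j ^ 2) := by
    simp [M, mul_pow, mul_sum]
  have hΦ : ContractingWith _
      fun x : EuclideanSpace ℝ (Fin N) => WithLp.toLp 2 (M *ᵥ fun j => b (α j) (x j)) :=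
    ⟨by rwa [← Real.toNNReal_mul (Real.sqrt_nonneg _), Real.toNNReal_lt_one, hM],
      M.lipschitzWith_toLp_mulVec_comp fun j => hb_lip (α j)⟩
  have hc : MemLp (fun ω => WithLp.toLp 2 (M *ᵥ fun j => ξ j ω)) 2 P :=
    memLp_piLp_iff.2 fun i => by
      simpa only [Matrix.mulVec, dotProduct] using
        memLp_finsetSum univ fun j _ => (hξ j).const_mul (M i j)
  obtain ⟨Z, hZ, hZ_eq, hZ_unique⟩ := hΦ.exists_memLp_unique_ae_eq_comp_add hc
  have h_eq_iff (x : Fin N → ℝ) (ω : Ω) :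
      WithLp.toLp 2 x = WithLp.toLp 2 (M *ᵥ fun j => b (α j) (x j)) +
          WithLp.toLp 2 (M *ᵥ fun j => ξ j ω) ↔
        ∀ i, x i = (1 / (N : ℝ)) * ∑ j, W i j * (b (α j) (x j) + ξ j ω) := by
    simp [M, WithLp.ext_iff, funext_iff, Matrix.mulVec, dotProduct, mul_sum, mul_add,
      sum_add_distrib, mul_assoc]
  refine ⟨fun ω => (Z ω).ofLp, memLp_piLp_iff.1 hZ, ?_, fun z' hz' hz'_eq i => ?_⟩
  · filter_upwards [hZ_eq] with ω hω
    exact (h_eq_iff _ ω).1 hω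
  · have hz'Z := hZ_unique (fun ω => WithLp.toLp 2 (z' ω)) (memLp_piLp_iff.2 hz')
      (by filter_upwards [hz'_eq] with ω hω using (h_eq_iff _ ω).2 hω)
    filter_upwards [hz'Z] with ω hω
    exact congrArg (fun x : EuclideanSpace ℝ (Fin N) => x i) hω

/-- Existence and uniqueness of the random aggregate in the `N`-player network game. -/
theorem finite_player_aggregate_exists_unique
    {Ω : Type*} [MeasurableSpace Ω] (P : Measure Ω) [IsProbabilityMeasure P]
    (N : ℕ) (hN : 1 ≤ N) (W : Matrix (Fin N) (Fin N) ℝ) (hWsymm : W.IsSymm)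
    (A : Set ℝ) (hAclosed : IsClosed A) (hAconv : Convex ℝ A)
    (b : ℝ → ℝ → ℝ) (cα cz : ℝ)
    (hb : ∀ α α' z z' : ℝ,
      |b α z - b α' z'| ^ 2 ≤ cα * |α - α'| ^ 2 + cz * |z - z'| ^ 2)
    (ξ : Fin N → Ω → ℝ) (hξ : ∀ i, MemLp (ξ i) 2 P)
    (hWF : Real.sqrt cz *
      Real.sqrt ((1 / (N : ℝ) ^ 2) * ∑ i, ∑ j, W i j ^ 2) < 1)
    (α : Fin N → ℝ) (hα : ∀ i, α i ∈ A) :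
    ∃ z : Ω → Fin N → ℝ,
      (∀ i, MemLp (fun ω => z ω i) 2 P) ∧
      (∀ᵐ ω ∂P, ∀ i,
        z ω i = (1 / (N : ℝ)) * ∑ j, W i j * (b (α j) (z ω j) + ξ j ω)) ∧
      ∀ z' : Ω → Fin N → ℝ,
        (∀ i, MemLp (fun ω => z' ω i) 2 P) →
        (∀ᵐ ω ∂P, ∀ i,
          z' ω i = (1 / (N : ℝ)) * ∑ j, W i j * (b (α j) (z' ω j) + ξ j ω)) →
        ∀ i, (fun ω => z' ω i) =ᵐ[P] fun ω => z ω i :=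
  finite_player_aggregate_exists_unique_general P N W b cα cz hb ξ hξ hWF α
end

section
/- Let $\gamma\in(0,1/3)$, $w(x,y)=(xy)^{-\gamma}$, and $\theta\in\mathbb{R}$ with $|\theta|<1-2\gamma$. Then $\big[(\mathbf{I}-\theta\mathbf{W})^{-1}\mathbf{1}\big]_x=1+\frac{\theta(1-2\gamma)}{(1-\gamma)(1-2\gamma-\theta)}\,x^{-\gamma}$. In particular (with $\theta=1/3$), the unique Nash equilibrium of the beach graphon game on the power-law graphon is $\hat\alpha_x=\frac{1}{3}+\frac{1-2\gamma}{6(1-\gamma)(1-3\gamma)}\,x^{-\gamma}$. -/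
open MeasureTheory Set

/-!
The kernel `(x y)^{-γ} = x^{-γ} y^{-γ}` has rank one, so `𝐖 f = ⟨y^{-γ}, f⟩ · x^{-γ}` and `𝐖`
maps `span {1, x^{-γ}}` into itself, with `∫₀¹ y^{-γ} = 1/(1-γ)` and `∫₀¹ y^{-2γ} = 1/(1-2γ)`.
Hence a fixed point `α = θ (1 + 𝐖 α)` must be `θ + θ d x^{-γ}` with `d = ⟨y^{-γ}, α⟩`, and
pairing this form with `y^{-γ}` gives the scalar equation `d = θ/(1-γ) + θ d/(1-2γ)`, whose
unique solution for `θ ≠ 1-2γ` is the coefficient of `x^{-γ}` in `(I - θ𝐖)⁻¹ 1`.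
-/

/-- The operator `𝐖` of the power-law graphon `w(x, y) = (x y)^{-γ}` on `[0, 1]`. -/
noncomputable def powerLawGraphonOp (γ : ℝ) (f : ℝ → ℝ) (x : ℝ) : ℝ :=
  ∫ y in Icc (0:ℝ) 1, (x * y) ^ (-γ) * f y

/-- The coefficient of `x^{-γ}` in `(I - θ𝐖)⁻¹ 1`. -/
noncomputable def resolventCoeff (γ θ : ℝ) : ℝ :=
  θ * (1 - 2 * γ) / ((1 - γ) * (1 - 2 * γ - θ))

theorem setIntegral_Icc_zero_one_rpow {r : ℝ} (hr : -1 < r) :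
    ∫ y in Icc (0:ℝ) 1, y ^ r = 1 / (r + 1) := by
  rw [integral_Icc_eq_integral_Ioc, ← intervalIntegral.integral_of_le zero_le_one,
    integral_rpow (Or.inl hr), Real.one_rpow, Real.zero_rpow (by linarith)]
  ring

theorem integrableOn_Icc_zero_one_rpow {r : ℝ} (hr : -1 < r) :
    IntegrableOn (fun y : ℝ => y ^ r) (Icc (0:ℝ) 1) := by
  rw [integrableOn_Icc_iff_integrableOn_Ioc]
  exact (intervalIntegral.intervalIntegrable_rpow' hr).1

section

variable {γ : ℝ}

theorem powerLawGraphonOp_of_nonneg (f : ℝ → ℝ) {x : ℝ} (hx : 0 ≤ x) :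
    powerLawGraphonOp γ f x = x ^ (-γ) * ∫ y in Icc (0:ℝ) 1, y ^ (-γ) * f y := by
  rw [powerLawGraphonOp, ← integral_const_mul]
  refine setIntegral_congr_fun measurableSet_Icc fun y hy => ?_
  rw [Real.mul_rpow hx hy.1, mul_assoc]

theorem setIntegral_rpow_mul_affine (hγ : γ < 1 / 2) (a b : ℝ) :
    ∫ y in Icc (0:ℝ) 1, y ^ (-γ) * (a + b * y ^ (-γ)) = a / (1 - γ) + b / (1 - 2 * γ) := by
  have h₁ : -1 < -γ := by linarith
  have h₂ : -1 < -γ * 2 := by linarith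
  have hsq : ∀ y ∈ Icc (0:ℝ) 1,
      y ^ (-γ) * (a + b * y ^ (-γ)) = a * y ^ (-γ) + b * y ^ (-γ * 2) := by
    intro y hy
    rw [Real.rpow_mul hy.1, Real.rpow_two]
    ring
  rw [setIntegral_congr_fun measurableSet_Icc hsq,
    integral_add ((integrableOn_Icc_zero_one_rpow h₁).const_mul a)
      ((integrableOn_Icc_zero_one_rpow h₂).const_mul b),
    integral_const_mul, integral_const_mul, setIntegral_Icc_zero_one_rpow h₁,
    setIntegral_Icc_zero_one_rpow h₂]
  ring_nf

theorem powerLawGraphonOp_affine (hγ : γ < 1 / 2) (a b : ℝ) {x : ℝ} (hx : 0 ≤ x) :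
    powerLawGraphonOp γ (fun y => a + b * y ^ (-γ)) x =
      x ^ (-γ) * (a / (1 - γ) + b / (1 - 2 * γ)) := by
  rw [powerLawGraphonOp_of_nonneg _ hx, setIntegral_rpow_mul_affine hγ]

variable {θ : ℝ}

theorem eq_resolventCoeff_iff (hγ : γ < 1 / 2) (hθ : θ ≠ 1 - 2 * γ) {d : ℝ} :
    d = θ / (1 - γ) + θ * d / (1 - 2 * γ) ↔ d = resolventCoeff γ θ := by
  have h₁ : 1 - γ ≠ 0 := by linarith
  have h₂ : 1 - 2 * γ ≠ 0 := by linarith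
  have h₃ : 1 - 2 * γ - θ ≠ 0 := sub_ne_zero.2 hθ.symm
  rw [div_add_div _ _ h₁ h₂, eq_div_iff (mul_ne_zero h₁ h₂), resolventCoeff,
    eq_div_iff (mul_ne_zero h₁ h₃)]
  constructor <;> intro h <;> linear_combination h

theorem resolventCoeff_eq (hγ : γ < 1 / 2) (hθ : θ ≠ 1 - 2 * γ) :
    resolventCoeff γ θ = θ / (1 - γ) + θ * resolventCoeff γ θ / (1 - 2 * γ) :=
  (eq_resolventCoeff_iff hγ hθ).2 rfl

theorem one_add_resolventCoeff_mul_rpow_eq (hγ : γ < 1 / 2) (hθ : θ ≠ 1 - 2 * γ) {x : ℝ} (hx : 0 ≤ x) :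
    1 + resolventCoeff γ θ * x ^ (-γ) =
      1 + θ * powerLawGraphonOp γ (fun y => 1 + resolventCoeff γ θ * y ^ (-γ)) x := by
  rw [powerLawGraphonOp_affine hγ _ _ hx]
  linear_combination x ^ (-γ) * resolventCoeff_eq hγ hθ

theorem ae_eq_of_ae_eq_mul_one_add_powerLawGraphonOp (hγ : γ < 1 / 2) (hθ : θ ≠ 1 - 2 * γ)
    {α : ℝ → ℝ}
    (hα : ∀ᵐ x ∂(volume.restrict (Icc (0:ℝ) 1)), α x = θ * (1 + powerLawGraphonOp γ α x)) :
    α =ᵐ[volume.restrict (Icc (0:ℝ) 1)] fun x => θ * (1 + resolventCoeff γ θ * x ^ (-γ)) := by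
  set d := ∫ y in Icc (0:ℝ) 1, y ^ (-γ) * α y
  have hform : α =ᵐ[volume.restrict (Icc (0:ℝ) 1)] fun x => θ + θ * d * x ^ (-γ) := by
    filter_upwards [hα, ae_restrict_mem measurableSet_Icc] with x hx hmem
    rw [hx, powerLawGraphonOp_of_nonneg _ hmem.1]
    ring
  have hd : d = θ / (1 - γ) + θ * d / (1 - 2 * γ) := by
    calc d = ∫ y in Icc (0:ℝ) 1, y ^ (-γ) * (θ + θ * d * y ^ (-γ)) :=
          integral_congr_ae (hform.mono fun y hy => by simp only [hy])
      _ = _ := setIntegral_rpow_mul_affine hγ _ _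
  filter_upwards [hform] with x hx
  rw [hx, (eq_resolventCoeff_iff hγ hθ).1 hd]
  ring

end

theorem power_law_graphon_resolvent_and_nash_general
    (γ θ : ℝ) (hγ : γ < 1 / 3) (hθ : |θ| < 1 - 2 * γ) :
    -- `(I - θW)⁻¹ 1` is the function `x ↦ 1 + θ(1-2γ)/((1-γ)(1-2γ-θ)) x^{-γ}`,
    -- i.e. it satisfies `f = 1 + θ W f`:
    (∀ x ∈ Set.Ioc (0:ℝ) 1,
      (1 + (θ * (1 - 2 * γ)) / ((1 - γ) * (1 - 2 * γ - θ)) * x ^ (-γ)) =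
        1 + θ * ∫ y in Set.Icc (0:ℝ) 1, (x * y) ^ (-γ) *
          (1 + (θ * (1 - 2 * γ)) / ((1 - γ) * (1 - 2 * γ - θ)) * y ^ (-γ))) ∧
    -- with `θ = 1/3`, the unique Nash equilibrium of the beach graphon game:
    ((∀ x ∈ Set.Ioc (0:ℝ) 1,
      (1 / 3 + (1 - 2 * γ) / (6 * (1 - γ) * (1 - 3 * γ)) * x ^ (-γ)) =
        (1 / 3) * (1 + ∫ y in Set.Icc (0:ℝ) 1, (x * y) ^ (-γ) *
          (1 / 3 + (1 - 2 * γ) / (6 * (1 - γ) * (1 - 3 * γ)) * y ^ (-γ)))) ∧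
      ∀ α' : ℝ → ℝ,
        MemLp α' 2 (volume.restrict (Set.Icc (0:ℝ) 1)) →
        (∀ᵐ x ∂(volume.restrict (Set.Icc (0:ℝ) 1)),
          α' x = (1 / 3) * (1 + ∫ y in Set.Icc (0:ℝ) 1,
            (x * y) ^ (-γ) * α' y)) →
        α' =ᵐ[volume.restrict (Set.Icc (0:ℝ) 1)] fun x =>
          1 / 3 + (1 - 2 * γ) / (6 * (1 - γ) * (1 - 3 * γ)) * x ^ (-γ)) := by
  have hγ₂ : γ < 1 / 2 := by linarith
  have hθ₂ : θ ≠ 1 - 2 * γ := by linarith [le_abs_self θ]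
  have hthird : (1 / 3 : ℝ) ≠ 1 - 2 * γ := by linarith
  have hnash : (1 / 3) * resolventCoeff γ (1 / 3) = (1 - 2 * γ) / (6 * (1 - γ) * (1 - 3 * γ)) := by
    have : 1 - γ ≠ 0 := by linarith
    have : 1 - 3 * γ ≠ 0 := by linarith
    have : 1 - 2 * γ - 1 / 3 = 2 * (1 - 3 * γ) / 3 := by ring
    rw [resolventCoeff, this]
    field_simp
    ring
  refine ⟨fun x hx => one_add_resolventCoeff_mul_rpow_eq hγ₂ hθ₂ hx.1.le, fun x hx => ?_,
    fun α _ hα => ?_⟩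
  · change _ = 1 / 3 * (1 + powerLawGraphonOp γ (fun y => _ + _ * y ^ (-γ)) x)
    rw [powerLawGraphonOp_affine hγ₂ _ _ hx.1.le, ← hnash]
    linear_combination x ^ (-γ) / 3 * resolventCoeff_eq hγ₂ hthird
  · refine (ae_eq_of_ae_eq_mul_one_add_powerLawGraphonOp hγ₂ hthird hα).trans
      (Filter.Eventually.of_forall fun x => ?_)
    simp only [← hnash]
    ring

/-- Resolvent of the power-law graphon applied to `1`, and the explicit Nash
equilibrium of the beach graphon game on the power-law graphon. -/
theorem power_law_graphon_resolvent_and_nash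
    (γ θ : ℝ) (hγ0 : 0 < γ) (hγ : γ < 1 / 3) (hθ : |θ| < 1 - 2 * γ) :
    -- `(I - θW)⁻¹ 1` is the function `x ↦ 1 + θ(1-2γ)/((1-γ)(1-2γ-θ)) x^{-γ}`,
    -- i.e. it satisfies `f = 1 + θ W f`:
    (∀ x ∈ Set.Ioc (0:ℝ) 1,
      (1 + (θ * (1 - 2 * γ)) / ((1 - γ) * (1 - 2 * γ - θ)) * x ^ (-γ)) =
        1 + θ * ∫ y in Set.Icc (0:ℝ) 1, (x * y) ^ (-γ) *
          (1 + (θ * (1 - 2 * γ)) / ((1 - γ) * (1 - 2 * γ - θ)) * y ^ (-γ))) ∧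
    -- with `θ = 1/3`, the unique Nash equilibrium of the beach graphon game:
    ((∀ x ∈ Set.Ioc (0:ℝ) 1,
      (1 / 3 + (1 - 2 * γ) / (6 * (1 - γ) * (1 - 3 * γ)) * x ^ (-γ)) =
        (1 / 3) * (1 + ∫ y in Set.Icc (0:ℝ) 1, (x * y) ^ (-γ) *
          (1 / 3 + (1 - 2 * γ) / (6 * (1 - γ) * (1 - 3 * γ)) * y ^ (-γ)))) ∧
      ∀ α' : ℝ → ℝ,
        MemLp α' 2 (volume.restrict (Set.Icc (0:ℝ) 1)) →
        (∀ᵐ x ∂(volume.restrict (Set.Icc (0:ℝ) 1)),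
          α' x = (1 / 3) * (1 + ∫ y in Set.Icc (0:ℝ) 1,
            (x * y) ^ (-γ) * α' y)) →
        α' =ᵐ[volume.restrict (Set.Icc (0:ℝ) 1)] fun x =>
          1 / 3 + (1 - 2 * γ) / (6 * (1 - γ) * (1 - 3 * γ)) * x ^ (-γ)) :=
  power_law_graphon_resolvent_and_nash_general γ θ hγ hθ
end

section
/- Let $c=\frac{1}{3(1-\sin(1/3))}$ and define $\hat\alpha_x=c\big[\cos\big(\frac{1-x}{3}\big)-\sin\big(\frac{x}{3}\big)\big]$ for $x\in[0,1]$. Then $\hat{\boldsymbol{\alpha}}$ satisfies the simple threshold graphon equilibrium equation $3\hat\alpha_x-\int_0^{1-x}\hat\alpha_y\,dy=1$ for all $x\in[0,1]$. -/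
open Real

/-! With `g x = cos ((1 - x) / 3) - sin (x / 3)`, the primitive `y ↦ 3 cos (y / 3) - 3 sin ((1 - y) / 3)`
of `g` takes the value `3 g x` at `1 - x`, so `∫_0^{1-x} g = 3 g x - 3 (1 - sin (1/3))`. The terms in `g x`
cancel in `3 c g x - c ∫_0^{1-x} g`, leaving `3 c (1 - sin (1/3)) = 1`. -/

lemma hasDerivAt_threshold_primitive (y : ℝ) :
    HasDerivAt (fun y => 3 * cos (y / 3) - 3 * sin ((1 - y) / 3))
      (cos ((1 - y) / 3) - sin (y / 3)) y := by
  have hcos := (((hasDerivAt_id' y).div_const 3).cos).const_mul 3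
  have hsin := ((((hasDerivAt_id' y).const_sub 1).div_const 3).sin).const_mul 3
  exact (hcos.sub hsin).congr_deriv (by ring)

lemma integral_threshold_profile (x : ℝ) :
    ∫ y in (0:ℝ)..(1 - x), (cos ((1 - y) / 3) - sin (y / 3)) =
      3 * (cos ((1 - x) / 3) - sin (x / 3)) - 3 * (1 - sin (1 / 3)) := by
  rw [intervalIntegral.integral_eq_sub_of_hasDerivAt (fun y _ => hasDerivAt_threshold_primitive y)
    (Continuous.intervalIntegrable (by fun_prop) _ _)]
  simp only [sub_sub_cancel, zero_div, cos_zero, sub_zero]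
  ring

/-- The explicit profile solves the simple threshold graphon equilibrium equation
`3 α̂_x - ∫_0^{1-x} α̂_y dy = 1`. -/
theorem simple_threshold_graphon_nash :
    ∀ x ∈ Set.Icc (0:ℝ) 1,
      3 * ((1 / (3 * (1 - Real.sin (1 / 3)))) *
          (Real.cos ((1 - x) / 3) - Real.sin (x / 3))) -
        (∫ y in (0:ℝ)..(1 - x),
          (1 / (3 * (1 - Real.sin (1 / 3)))) *
            (Real.cos ((1 - y) / 3) - Real.sin (y / 3))) = 1 := by
  intro x _
  rw [intervalIntegral.integral_const_mul, integral_threshold_profile]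
  have hsin : sin (1 / 3) < 1 := (sin_lt (by norm_num)).trans (by norm_num)
  have hne : 1 - sin (1 / 3) ≠ 0 := sub_ne_zero.mpr hsin.ne'
  field_simp
  ring
end
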